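/- arXiv:1908.04110 — 2 statements merged into one kernel-verified Lean document; each statement's English description precedes it below -/
import Mathlib

section
/- Let Θ ⊆ ℝ^p be a nonempty set, let 0 < δ < 1 ≤ D < ∞, and let g, h : ℝ^p → ℝ be differentiable with g(θ), h(θ) ∈ [δ, D] for all θ ∈ Θ and with sup_{θ∈Θ}‖∇g‖ and sup_{θ∈Θ}‖∇h‖ finite. Set C₁(h) := (1 + sup_{θ∈Θ}‖∇h(θ)‖)/δ². Then sup_{θ∈Θ} ‖∇(log∘g)(θ) − ∇(log∘h)(θ)‖ ≤ C₁(h) · ( sup_{θ∈Θ}|g(θ) − h(θ)| + sup_{θ∈Θ}‖∇g(θ) − ∇h(θ)‖ ), provided the suprema of |g − h| and ‖∇g − ∇h‖ over Θ are finite. -/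
/-!
Since `∇(log ∘ g) = g⁻¹ • ∇g`, the difference of the two gradients splits as
`g⁻¹ • (∇g - ∇h) + (g⁻¹ - h⁻¹) • ∇h`, with `g⁻¹ ≤ δ⁻¹ ≤ δ⁻²` (as `δ ≤ 1`) and
`|g⁻¹ - h⁻¹| = |g - h| / (g h) ≤ |g - h| / δ²`. This bounds the difference pointwise by
`(1 + ‖∇h‖) / δ² · (|g - h| + ‖∇g - ∇h‖)`, and each factor is dominated by its supremum.
-/

open InnerProductSpace Set

section Gradient

variable {F : Type*} [NormedAddCommGroup F] [InnerProductSpace ℝ F] [CompleteSpace F]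
  {f : F → ℝ} {f' x : F}

theorem HasGradientAt.log (hf : HasGradientAt f f' x) (hx : f x ≠ 0) :
    HasGradientAt (fun y => Real.log (f y)) ((f x)⁻¹ • f') x := by
  rw [hasGradientAt_iff_hasFDerivAt, map_smul]
  exact hf.hasFDerivAt.log hx

theorem gradient_log_comp (hf : DifferentiableAt ℝ f x) (hx : f x ≠ 0) :
    gradient (fun y => Real.log (f y)) x = (f x)⁻¹ • gradient f x :=
  (hf.hasGradientAt.log hx).gradient

end Gradient

theorem abs_inv_sub_inv_le {δ a b : ℝ} (hδ : 0 < δ) (ha : δ ≤ a) (hb : δ ≤ b) :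
    |a⁻¹ - b⁻¹| ≤ |a - b| / δ ^ 2 := by
  have ha₀ : 0 < a := hδ.trans_le ha
  have hb₀ : 0 < b := hδ.trans_le hb
  have hab : δ ^ 2 ≤ a * b := by rw [sq]; exact mul_le_mul ha hb hδ.le ha₀.le
  calc |a⁻¹ - b⁻¹| = |a - b| / (a * b) := by
        rw [inv_sub_inv ha₀.ne' hb₀.ne', abs_div, abs_sub_comm, abs_of_pos (mul_pos ha₀ hb₀)]
    _ ≤ |a - b| / δ ^ 2 := div_le_div_of_nonneg_left (abs_nonneg _) (by positivity) hab

theorem norm_inv_smul_sub_inv_smul_le {E : Type*} [SeminormedAddCommGroup E] [NormedSpace ℝ E]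
    {δ a b : ℝ} (hδ : 0 < δ) (hδ1 : δ ≤ 1) (ha : δ ≤ a) (hb : δ ≤ b) (u v : E) :
    ‖a⁻¹ • u - b⁻¹ • v‖ ≤ (1 + ‖v‖) / δ ^ 2 * (|a - b| + ‖u - v‖) := by
  have ha₀ : 0 < a := hδ.trans_le ha
  have ha_inv : a⁻¹ ≤ (δ ^ 2)⁻¹ :=
    inv_anti₀ (by positivity) ((pow_le_of_le_one hδ.le hδ1 two_ne_zero).trans ha)
  have hsplit : a⁻¹ • u - b⁻¹ • v = a⁻¹ • (u - v) + (a⁻¹ - b⁻¹) • v := by module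
  calc ‖a⁻¹ • u - b⁻¹ • v‖ ≤ a⁻¹ * ‖u - v‖ + |a⁻¹ - b⁻¹| * ‖v‖ := by
        rw [hsplit]
        refine (norm_add_le _ _).trans_eq ?_
        rw [norm_smul, norm_smul, Real.norm_of_nonneg (inv_nonneg.2 ha₀.le), Real.norm_eq_abs]
    _ ≤ (δ ^ 2)⁻¹ * ‖u - v‖ + |a - b| / δ ^ 2 * ‖v‖ := by
        gcongr
        exact abs_inv_sub_inv_le hδ ha hb
    _ ≤ (1 + ‖v‖) / δ ^ 2 * (|a - b| + ‖u - v‖) := by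
        rw [div_mul_eq_mul_div, div_mul_eq_mul_div, ← div_eq_inv_mul, ← add_div]
        gcongr
        nlinarith [norm_nonneg v, norm_nonneg (u - v), abs_nonneg (a - b)]

theorem stmt_15_general {p : ℕ} (Θ : Set (EuclideanSpace ℝ (Fin p)))
    (δ D : ℝ) (hδ : 0 < δ) (hδ1 : δ < 1)
    (g h : EuclideanSpace ℝ (Fin p) → ℝ)
    (hgd : Differentiable ℝ g) (hhd : Differentiable ℝ h)
    (hgmem : ∀ θ ∈ Θ, g θ ∈ Set.Icc δ D) (hhmem : ∀ θ ∈ Θ, h θ ∈ Set.Icc δ D)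
    (hbgh : BddAbove ((fun θ => ‖gradient h θ‖) '' Θ))
    (hb0 : BddAbove ((fun θ => |g θ - h θ|) '' Θ))
    (hb1 : BddAbove ((fun θ => ‖gradient g θ - gradient h θ‖) '' Θ)) :
    sSup ((fun θ => ‖gradient (fun x => Real.log (g x)) θ -
        gradient (fun x => Real.log (h x)) θ‖) '' Θ) ≤
      ((1 + sSup ((fun θ => ‖gradient h θ‖) '' Θ)) / δ ^ 2) *
        (sSup ((fun θ => |g θ - h θ|) '' Θ) +
          sSup ((fun θ => ‖gradient g θ - gradient h θ‖) '' Θ)) := by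
  have hM : 0 ≤ sSup ((fun θ => ‖gradient h θ‖) '' Θ) :=
    Real.sSup_nonneg (forall_mem_image.2 fun _ _ => norm_nonneg _)
  have hS₀ : 0 ≤ sSup ((fun θ => |g θ - h θ|) '' Θ) :=
    Real.sSup_nonneg (forall_mem_image.2 fun _ _ => abs_nonneg _)
  have hS₁ : 0 ≤ sSup ((fun θ => ‖gradient g θ - gradient h θ‖) '' Θ) :=
    Real.sSup_nonneg (forall_mem_image.2 fun _ _ => norm_nonneg _)
  refine Real.sSup_le (forall_mem_image.2 fun θ hθ => ?_) (by positivity)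
  have hg := (hgmem θ hθ).1
  have hh := (hhmem θ hθ).1
  rw [gradient_log_comp (hgd θ) (hδ.trans_le hg).ne', gradient_log_comp (hhd θ) (hδ.trans_le hh).ne']
  calc _ ≤ (1 + ‖gradient h θ‖) / δ ^ 2 * (|g θ - h θ| + ‖gradient g θ - gradient h θ‖) :=
        norm_inv_smul_sub_inv_smul_le hδ hδ1.le hg hh _ _
    _ ≤ _ := by gcongr <;> exact le_csSup ‹_› (mem_image_of_mem _ hθ)

/-- Corollary 16(ii) of the paper: with `C₁(h) = (1 + sup_θ‖∇h‖)/δ²`,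
`sup_θ ‖∇(log∘g) - ∇(log∘h)‖ ≤ C₁(h) (sup_θ|g-h| + sup_θ‖∇g-∇h‖)`. -/
theorem stmt_15 {p : ℕ} (Θ : Set (EuclideanSpace ℝ (Fin p))) (hΘ : Θ.Nonempty)
    (δ D : ℝ) (hδ : 0 < δ) (hδ1 : δ < 1) (hD : 1 ≤ D)
    (g h : EuclideanSpace ℝ (Fin p) → ℝ)
    (hgd : Differentiable ℝ g) (hhd : Differentiable ℝ h)
    (hgmem : ∀ θ ∈ Θ, g θ ∈ Set.Icc δ D) (hhmem : ∀ θ ∈ Θ, h θ ∈ Set.Icc δ D)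
    (hbgg : BddAbove ((fun θ => ‖gradient g θ‖) '' Θ))
    (hbgh : BddAbove ((fun θ => ‖gradient h θ‖) '' Θ))
    (hb0 : BddAbove ((fun θ => |g θ - h θ|) '' Θ))
    (hb1 : BddAbove ((fun θ => ‖gradient g θ - gradient h θ‖) '' Θ)) :
    sSup ((fun θ => ‖gradient (fun x => Real.log (g x)) θ -
        gradient (fun x => Real.log (h x)) θ‖) '' Θ) ≤
      ((1 + sSup ((fun θ => ‖gradient h θ‖) '' Θ)) / δ ^ 2) *
        (sSup ((fun θ => |g θ - h θ|) '' Θ) +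
          sSup ((fun θ => ‖gradient g θ - gradient h θ‖) '' Θ)) :=
  stmt_15_general Θ δ D hδ hδ1 g h hgd hhd hgmem hhmem hbgh hb0 hb1
end

section
/- Let Θ ⊆ ℝ^p be a nonempty set, let 0 < δ < 1 ≤ D < ∞, and let g, h : ℝ^p → ℝ be twice differentiable with g(θ), h(θ) ∈ [δ, D] for all θ ∈ Θ and with sup_{θ∈Θ}‖∇g‖, sup_{θ∈Θ}‖∇h‖, sup_{θ∈Θ}‖∇²g‖, sup_{θ∈Θ}‖∇²h‖ all finite. Set C₂(h) := 4(1 + (sup_{θ∈Θ}‖∇h(θ)‖)² + sup_{θ∈Θ}‖∇²h(θ)‖)/δ³. Then sup_{θ∈Θ} ‖∇²(log∘g)(θ) − ∇²(log∘h)(θ)‖ ≤ C₂(h) · ( sup_Θ|g − h| + sup_Θ‖∇g − ∇h‖ + (sup_Θ‖∇g − ∇h‖)² + sup_Θ‖∇²g − ∇²h‖ ), provided the suprema of |g − h|, ‖∇g − ∇h‖ and ‖∇²g − ∇²h‖ over Θ are finite. -/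
/-!
The Hessian of `log ∘ g` is `g⁻¹ ∇²g - g⁻² ∇g ∇gᵀ`, where `∇g ∇gᵀ` is `(Dg).smulRight (Dg)`.
Adding and subtracting mixed terms splits the difference of these expressions for `g` and `h`
into four pieces, controlled by `‖∇²g - ∇²h‖`, `|g - h|`, `‖∇g - ∇h‖` and `|g - h|` again,
because on `[δ, ∞)` the functions `x⁻¹` and `x⁻²` are bounded by `δ⁻¹`, `δ⁻²` and Lipschitz
with constants `δ⁻²`, `2δ⁻³`. Collecting the powers of `δ⁻¹ ≥ 1` and using `2x ≤ 1 + x²`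
gives the constant `C₂(h)`.
-/

open Filter Topology

theorem abs_inv_sub_inv_le_s16 {δ u v : ℝ} (hδ : 0 < δ) (hu : δ ≤ u) (hv : δ ≤ v) :
    |u⁻¹ - v⁻¹| ≤ |u - v| / δ ^ 2 := by
  have hu0 : 0 < u := hδ.trans_le hu
  have hv0 : 0 < v := hδ.trans_le hv
  rw [inv_sub_inv hu0.ne' hv0.ne', abs_div, abs_sub_comm, abs_of_pos (mul_pos hu0 hv0), sq]
  gcongr

theorem abs_inv_sq_sub_inv_sq_le {δ u v : ℝ} (hδ : 0 < δ) (hu : δ ≤ u) (hv : δ ≤ v) :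
    |(u ^ 2)⁻¹ - (v ^ 2)⁻¹| ≤ 2 * |u - v| / δ ^ 3 := by
  have hsum : |u⁻¹ + v⁻¹| ≤ 2 / δ := by
    rw [abs_of_pos (by positivity [hδ.trans_le hu, hδ.trans_le hv])]
    linarith [inv_anti₀ hδ hu, inv_anti₀ hδ hv, show 2 / δ = δ⁻¹ + δ⁻¹ by ring]
  calc |(u ^ 2)⁻¹ - (v ^ 2)⁻¹| = |u⁻¹ + v⁻¹| * |u⁻¹ - v⁻¹| := by
        rw [← abs_mul, ← inv_pow, ← inv_pow, sq_sub_sq]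
    _ ≤ 2 / δ * (|u - v| / δ ^ 2) :=
        mul_le_mul hsum (abs_inv_sub_inv_le_s16 hδ hu hv) (abs_nonneg _) (by positivity)
    _ = 2 * |u - v| / δ ^ 3 := by field_simp

theorem norm_inv_smul_sub_inv_sq_smul_sub_le {F : Type*} [NormedAddCommGroup F]
    [NormedSpace ℝ F] {δ u v : ℝ} (hδ : 0 < δ) (hu : δ ≤ u) (hv : δ ≤ v) (b b' c c' : F) :
    ‖(u⁻¹ • b - (u ^ 2)⁻¹ • c) - (v⁻¹ • b' - (v ^ 2)⁻¹ • c')‖ ≤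
      ‖b - b'‖ / δ + |u - v| * ‖b'‖ / δ ^ 2 + ‖c - c'‖ / δ ^ 2 +
        2 * |u - v| * ‖c'‖ / δ ^ 3 := by
  have hsplit : (u⁻¹ • b - (u ^ 2)⁻¹ • c) - (v⁻¹ • b' - (v ^ 2)⁻¹ • c') =
      u⁻¹ • (b - b') + (u⁻¹ - v⁻¹) • b' - (u ^ 2)⁻¹ • (c - c') -
        ((u ^ 2)⁻¹ - (v ^ 2)⁻¹) • c' := by
    module
  have hinv : |u⁻¹| ≤ δ⁻¹ := by
    rw [abs_of_pos (inv_pos.2 (hδ.trans_le hu))]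
    exact inv_anti₀ hδ hu
  have hinv_sq : |(u ^ 2)⁻¹| ≤ (δ ^ 2)⁻¹ := by
    rw [abs_of_pos (by positivity [hδ.trans_le hu])]
    exact inv_anti₀ (by positivity) (by gcongr)
  have hlip := abs_inv_sub_inv_le_s16 hδ hu hv
  have hlip_sq := abs_inv_sq_sub_inv_sq_le hδ hu hv
  calc _ ≤ ‖u⁻¹ • (b - b')‖ + ‖(u⁻¹ - v⁻¹) • b'‖ + ‖(u ^ 2)⁻¹ • (c - c')‖ +
        ‖((u ^ 2)⁻¹ - (v ^ 2)⁻¹) • c'‖ := by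
        rw [hsplit]
        exact (norm_sub_le _ _).trans
          (add_le_add_left ((norm_sub_le _ _).trans (add_le_add_left (norm_add_le _ _) _)) _)
    _ = |u⁻¹| * ‖b - b'‖ + |u⁻¹ - v⁻¹| * ‖b'‖ + |(u ^ 2)⁻¹| * ‖c - c'‖ +
        |(u ^ 2)⁻¹ - (v ^ 2)⁻¹| * ‖c'‖ := by
        simp only [norm_smul, Real.norm_eq_abs]
    _ ≤ δ⁻¹ * ‖b - b'‖ + |u - v| / δ ^ 2 * ‖b'‖ + (δ ^ 2)⁻¹ * ‖c - c'‖ +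
        2 * |u - v| / δ ^ 3 * ‖c'‖ := by gcongr
    _ = _ := by ring

theorem logHessian_error_terms_le {δ E₀ E₁ E₂ M₁ M₂ : ℝ} (hδ : 0 < δ) (hδ1 : δ ≤ 1)
    (hE₀ : 0 ≤ E₀) (hE₁ : 0 ≤ E₁) (hE₂ : 0 ≤ E₂) (hM₂ : 0 ≤ M₂) :
    E₂ / δ + E₀ * M₂ / δ ^ 2 + E₁ * (E₁ + 2 * M₁) / δ ^ 2 + 2 * E₀ * M₁ ^ 2 / δ ^ 3 ≤
      4 * (1 + M₁ ^ 2 + M₂) / δ ^ 3 * (E₀ + E₁ + E₁ ^ 2 + E₂) := by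
  have hlhs : E₂ / δ + E₀ * M₂ / δ ^ 2 + E₁ * (E₁ + 2 * M₁) / δ ^ 2 + 2 * E₀ * M₁ ^ 2 / δ ^ 3 =
      (δ ^ 2 * E₂ + δ * (E₀ * M₂) + δ * (E₁ * (E₁ + 2 * M₁)) + 2 * E₀ * M₁ ^ 2) / δ ^ 3 := by
    field_simp
  rw [hlhs, div_mul_eq_mul_div]
  gcongr
  have h2M : 2 * M₁ ≤ 1 + M₁ ^ 2 := by nlinarith [sq_nonneg (M₁ - 1)]
  have hδ2 : δ ^ 2 ≤ 1 := pow_le_one₀ hδ.le hδ1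
  nlinarith [mul_le_mul_of_nonneg_left h2M hE₁, mul_le_mul_of_nonneg_left hδ2 hE₂,
    mul_le_mul_of_nonneg_left hδ1 (mul_nonneg hE₀ hM₂), mul_nonneg hE₁ (sq_nonneg M₁),
    mul_nonneg hE₀ (sq_nonneg M₁), mul_nonneg (sq_nonneg E₁) (sq_nonneg M₁), mul_nonneg hE₀ hM₂,
    mul_nonneg hE₁ hM₂, mul_nonneg hE₂ hM₂, mul_nonneg (sq_nonneg E₁) hM₂,
    mul_nonneg hE₂ (sq_nonneg M₁)]

section

variable {E : Type*} [NormedAddCommGroup E] [NormedSpace ℝ E]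

theorem fderiv_fderiv_log_comp {g : E → ℝ} {x : E}
    (hg : ∀ᶠ y in 𝓝 x, DifferentiableAt ℝ g y) (hg2 : DifferentiableAt ℝ (fderiv ℝ g) x)
    (hx : 0 < g x) :
    fderiv ℝ (fderiv ℝ fun y => Real.log (g y)) x =
      (g x)⁻¹ • fderiv ℝ (fderiv ℝ g) x -
        (g x ^ 2)⁻¹ • (fderiv ℝ g x).smulRight (fderiv ℝ g x) := by
  have hpos : ∀ᶠ y in 𝓝 x, 0 < g y :=
    hg.self_of_nhds.continuousAt.eventually (lt_mem_nhds hx)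
  have hlog : fderiv ℝ (fun y => Real.log (g y)) =ᶠ[𝓝 x] fun y => (g y)⁻¹ • fderiv ℝ g y := by
    filter_upwards [hg, hpos] with y hy hy0
    exact (hy.hasFDerivAt.log hy0.ne').fderiv
  have hinv : HasFDerivAt (fun y => (g y)⁻¹) (-(g x ^ 2)⁻¹ • fderiv ℝ g x) x :=
    (hasDerivAt_inv hx.ne').comp_hasFDerivAt x hg.self_of_nhds.hasFDerivAt
  rw [hlog.fderiv_eq, (hinv.fun_smul hg2.hasFDerivAt).fderiv, sub_eq_add_neg]
  ext
  simp [mul_assoc]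

theorem norm_smulRight_self_sub_le (a a' : E →L[ℝ] ℝ) :
    ‖a.smulRight a - a'.smulRight a'‖ ≤ ‖a - a'‖ * (‖a - a'‖ + 2 * ‖a'‖) := by
  have hsplit : a.smulRight a - a'.smulRight a' =
      (a - a').smulRight a + a'.smulRight (a - a') := by
    ext
    simp only [sub_apply, add_apply, smul_apply, smul_eq_mul,
      ContinuousLinearMap.smulRight_apply]
    ring
  have ha : ‖a‖ ≤ ‖a - a'‖ + ‖a'‖ := norm_le_norm_sub_add a a'
  calc ‖a.smulRight a - a'.smulRight a'‖ ≤ ‖a - a'‖ * ‖a‖ + ‖a'‖ * ‖a - a'‖ := by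
        rw [hsplit, ← ContinuousLinearMap.norm_smulRight_apply (a - a') a,
          ← ContinuousLinearMap.norm_smulRight_apply a' (a - a')]
        exact norm_add_le ((a - a').smulRight a) (a'.smulRight (a - a'))
    _ ≤ ‖a - a'‖ * (‖a - a'‖ + 2 * ‖a'‖) := by nlinarith [norm_nonneg (a - a')]

theorem norm_fderiv_fderiv_log_comp_sub_le {g h : E → ℝ} {x : E} {δ E₀ E₁ E₂ M₁ M₂ : ℝ}
    (hδ : 0 < δ) (hδ1 : δ ≤ 1)
    (hg : ∀ᶠ y in 𝓝 x, DifferentiableAt ℝ g y) (hg2 : DifferentiableAt ℝ (fderiv ℝ g) x)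
    (hh : ∀ᶠ y in 𝓝 x, DifferentiableAt ℝ h y) (hh2 : DifferentiableAt ℝ (fderiv ℝ h) x)
    (hgx : δ ≤ g x) (hhx : δ ≤ h x) (h₀ : |g x - h x| ≤ E₀)
    (h₁ : ‖fderiv ℝ g x - fderiv ℝ h x‖ ≤ E₁)
    (h₂ : ‖fderiv ℝ (fderiv ℝ g) x - fderiv ℝ (fderiv ℝ h) x‖ ≤ E₂)
    (hM₁ : ‖fderiv ℝ h x‖ ≤ M₁) (hM₂ : ‖fderiv ℝ (fderiv ℝ h) x‖ ≤ M₂) :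
    ‖fderiv ℝ (fderiv ℝ fun y => Real.log (g y)) x -
        fderiv ℝ (fderiv ℝ fun y => Real.log (h y)) x‖ ≤
      4 * (1 + M₁ ^ 2 + M₂) / δ ^ 3 * (E₀ + E₁ + E₁ ^ 2 + E₂) := by
  have hE₀ : 0 ≤ E₀ := (abs_nonneg _).trans h₀
  have hE₁ : 0 ≤ E₁ := (norm_nonneg _).trans h₁
  have hE₂ : 0 ≤ E₂ := (ContinuousLinearMap.opNorm_nonneg _).trans h₂
  have hM₂₀ : 0 ≤ M₂ := (ContinuousLinearMap.opNorm_nonneg _).trans hM₂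
  have hc : ‖(fderiv ℝ g x).smulRight (fderiv ℝ g x) -
      (fderiv ℝ h x).smulRight (fderiv ℝ h x)‖ ≤ E₁ * (E₁ + 2 * M₁) :=
    (norm_smulRight_self_sub_le _ _).trans (by gcongr)
  have hc' : ‖(fderiv ℝ h x).smulRight (fderiv ℝ h x)‖ ≤ M₁ ^ 2 := by
    rw [ContinuousLinearMap.norm_smulRight_apply, ← sq]
    gcongr
  rw [fderiv_fderiv_log_comp hg hg2 (hδ.trans_le hgx),
    fderiv_fderiv_log_comp hh hh2 (hδ.trans_le hhx)]
  refine (norm_inv_smul_sub_inv_sq_smul_sub_le (F := E →L[ℝ] E →L[ℝ] ℝ) hδ hgx hhx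
    _ _ _ _).trans ((?_ : _ ≤ _).trans (logHessian_error_terms_le hδ hδ1 hE₀ hE₁ hE₂ hM₂₀))
  gcongr

end

section

variable {F : Type*} [NormedAddCommGroup F] [InnerProductSpace ℝ F] [CompleteSpace F]

theorem norm_gradient (f : F → ℝ) (x : F) : ‖gradient f x‖ = ‖fderiv ℝ f x‖ :=
  LinearIsometryEquiv.norm_map _ _

theorem norm_gradient_sub_gradient (f₁ f₂ : F → ℝ) (x : F) :
    ‖gradient f₁ x - gradient f₂ x‖ = ‖fderiv ℝ f₁ x - fderiv ℝ f₂ x‖ := by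
  rw [gradient, gradient, ← map_sub, LinearIsometryEquiv.norm_map]

end

theorem stmt_16_general {p : ℕ} (Θ : Set (EuclideanSpace ℝ (Fin p)))
    (δ D : ℝ) (hδ : 0 < δ) (hδ1 : δ < 1)
    (g h : EuclideanSpace ℝ (Fin p) → ℝ)
    (hgd : Differentiable ℝ g) (hgd2 : Differentiable ℝ (fderiv ℝ g))
    (hhd : Differentiable ℝ h) (hhd2 : Differentiable ℝ (fderiv ℝ h))
    (hgmem : ∀ θ ∈ Θ, g θ ∈ Set.Icc δ D) (hhmem : ∀ θ ∈ Θ, h θ ∈ Set.Icc δ D)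
    (hbgh : BddAbove ((fun θ => ‖gradient h θ‖) '' Θ))
    (hbHh : BddAbove ((fun θ => ‖fderiv ℝ (fderiv ℝ h) θ‖) '' Θ))
    (hb0 : BddAbove ((fun θ => |g θ - h θ|) '' Θ))
    (hb1 : BddAbove ((fun θ => ‖gradient g θ - gradient h θ‖) '' Θ))
    (hb2 : BddAbove ((fun θ => ‖fderiv ℝ (fderiv ℝ g) θ - fderiv ℝ (fderiv ℝ h) θ‖) '' Θ)) :
    sSup ((fun θ => ‖fderiv ℝ (fderiv ℝ (fun x => Real.log (g x))) θ -
        fderiv ℝ (fderiv ℝ (fun x => Real.log (h x))) θ‖) '' Θ) ≤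
      (4 * (1 + sSup ((fun θ => ‖gradient h θ‖) '' Θ) ^ 2 +
          sSup ((fun θ => ‖fderiv ℝ (fderiv ℝ h) θ‖) '' Θ)) / δ ^ 3) *
        (sSup ((fun θ => |g θ - h θ|) '' Θ) +
          sSup ((fun θ => ‖gradient g θ - gradient h θ‖) '' Θ) +
          sSup ((fun θ => ‖gradient g θ - gradient h θ‖) '' Θ) ^ 2 +
          sSup ((fun θ => ‖fderiv ℝ (fderiv ℝ g) θ - fderiv ℝ (fderiv ℝ h) θ‖) '' Θ)) := by
  have hE₀ : 0 ≤ sSup ((fun θ => |g θ - h θ|) '' Θ) :=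
    Real.sSup_nonneg (by rintro _ ⟨θ, -, rfl⟩; positivity)
  have hE₁ : 0 ≤ sSup ((fun θ => ‖gradient g θ - gradient h θ‖) '' Θ) :=
    Real.sSup_nonneg (by rintro _ ⟨θ, -, rfl⟩; positivity)
  have hE₂ : 0 ≤ sSup ((fun θ => ‖fderiv ℝ (fderiv ℝ g) θ - fderiv ℝ (fderiv ℝ h) θ‖) '' Θ) :=
    Real.sSup_nonneg (by rintro _ ⟨θ, -, rfl⟩; positivity)
  have hM₂ : 0 ≤ sSup ((fun θ => ‖fderiv ℝ (fderiv ℝ h) θ‖) '' Θ) :=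
    Real.sSup_nonneg (by rintro _ ⟨θ, -, rfl⟩; positivity)
  refine Real.sSup_le ?_ (by positivity)
  rintro _ ⟨θ, hθ, rfl⟩
  exact norm_fderiv_fderiv_log_comp_sub_le hδ hδ1.le (.of_forall hgd) (hgd2 θ)
    (.of_forall hhd) (hhd2 θ) (hgmem θ hθ).1 (hhmem θ hθ).1 (le_csSup hb0 ⟨θ, hθ, rfl⟩)
    ((norm_gradient_sub_gradient g h θ).symm.trans_le (le_csSup hb1 ⟨θ, hθ, rfl⟩))
    (le_csSup hb2 ⟨θ, hθ, rfl⟩)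
    ((norm_gradient h θ).symm.trans_le (le_csSup hbgh ⟨θ, hθ, rfl⟩))
    (le_csSup hbHh ⟨θ, hθ, rfl⟩)

/-- Corollary 16(iii) of the paper: with
`C₂(h) = 4(1 + (sup_θ‖∇h‖)² + sup_θ‖∇²h‖)/δ³`,
`sup_θ ‖∇²(log∘g) - ∇²(log∘h)‖ ≤ C₂(h) (sup|g-h| + sup‖∇g-∇h‖ + (sup‖∇g-∇h‖)² + sup‖∇²g-∇²h‖)`;
the Hessian `∇²` is `fderiv ℝ (fderiv ℝ ·)` with its operator norm. -/
theorem stmt_16 {p : ℕ} (Θ : Set (EuclideanSpace ℝ (Fin p))) (hΘ : Θ.Nonempty)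
    (δ D : ℝ) (hδ : 0 < δ) (hδ1 : δ < 1) (hD : 1 ≤ D)
    (g h : EuclideanSpace ℝ (Fin p) → ℝ)
    (hgd : Differentiable ℝ g) (hgd2 : Differentiable ℝ (fderiv ℝ g))
    (hhd : Differentiable ℝ h) (hhd2 : Differentiable ℝ (fderiv ℝ h))
    (hgmem : ∀ θ ∈ Θ, g θ ∈ Set.Icc δ D) (hhmem : ∀ θ ∈ Θ, h θ ∈ Set.Icc δ D)
    (hbgg : BddAbove ((fun θ => ‖gradient g θ‖) '' Θ))
    (hbgh : BddAbove ((fun θ => ‖gradient h θ‖) '' Θ))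
    (hbHg : BddAbove ((fun θ => ‖fderiv ℝ (fderiv ℝ g) θ‖) '' Θ))
    (hbHh : BddAbove ((fun θ => ‖fderiv ℝ (fderiv ℝ h) θ‖) '' Θ))
    (hb0 : BddAbove ((fun θ => |g θ - h θ|) '' Θ))
    (hb1 : BddAbove ((fun θ => ‖gradient g θ - gradient h θ‖) '' Θ))
    (hb2 : BddAbove ((fun θ => ‖fderiv ℝ (fderiv ℝ g) θ - fderiv ℝ (fderiv ℝ h) θ‖) '' Θ)) :
    sSup ((fun θ => ‖fderiv ℝ (fderiv ℝ (fun x => Real.log (g x))) θ -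
        fderiv ℝ (fderiv ℝ (fun x => Real.log (h x))) θ‖) '' Θ) ≤
      (4 * (1 + sSup ((fun θ => ‖gradient h θ‖) '' Θ) ^ 2 +
          sSup ((fun θ => ‖fderiv ℝ (fderiv ℝ h) θ‖) '' Θ)) / δ ^ 3) *
        (sSup ((fun θ => |g θ - h θ|) '' Θ) +
          sSup ((fun θ => ‖gradient g θ - gradient h θ‖) '' Θ) +
          sSup ((fun θ => ‖gradient g θ - gradient h θ‖) '' Θ) ^ 2 +
          sSup ((fun θ => ‖fderiv ℝ (fderiv ℝ g) θ - fderiv ℝ (fderiv ℝ h) θ‖) '' Θ)) :=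
  stmt_16_general Θ δ D hδ hδ1 g h hgd hgd2 hhd hhd2 hgmem hhmem hbgh hbHh hb0 hb1 hb2
end
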